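/- arXiv:math/0606294 — 2 statements merged into one kernel-verified Lean document; each statement's English description precedes it below -/
import Mathlib

section
/- In the setting of the conformal-measure construction, suppose ℒ is a positive operator on bounded functions with ℒ(1_{U_R})(y) ≤ C R^{-β} for all y and R > 0 (where U_R = {|z| > R}), and ℒ^{n+1}(1_{U_R})(x) ≤ C R^{-β} ℒ^n 1(x) for all n. Then the measures ν_s = Σ_s^{-1} ∑_{n≥1} e^{-ns} (ℒ^n)^* δ_x (s > P, Σ_s = ∑ e^{-ns} ℒ^n 1(x)) satisfy ν_s(U_R) ≤ 2C e^{-P} R^{-β} for all s > P sufficiently close to P. -/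
/-!
Bounding the `n`-th term of the tail series by `C R^{-β} e^{-(n+1)s} ℒ^n 1(x)` and shifting the
index, the numerator of `ν_s(U_R)` is at most `C R^{-β} e^{-s} (1 + Σ_s)`. Since `Σ_s → ∞` as
`s ↓ P`, eventually `Σ_s ≥ 1`, so `(1 + Σ_s) / Σ_s ≤ 2`, and `e^{-s} ≤ e^{-P}`.
-/

open Real Filter Set

theorem exp_neg_succ_succ_mul (s : ℝ) (n : ℕ) :
    exp (-(((n + 1 : ℕ) : ℝ) + 1) * s) = exp (-s) * exp (-((n : ℝ) + 1) * s) := by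
  rw [← exp_add]
  push_cast
  ring_nf

theorem summable_exp_neg_succ_mul_of_succ {u : ℕ → ℝ} {s : ℝ}
    (hu : Summable fun n : ℕ => exp (-((n : ℝ) + 1) * s) * u (n + 1)) :
    Summable fun n : ℕ => exp (-((n : ℝ) + 1) * s) * u n :=
  (summable_nat_add_iff 1).mp <| (hu.mul_left (exp (-s))).congr fun n => by
    rw [exp_neg_succ_succ_mul, mul_assoc]

theorem tsum_exp_neg_succ_mul_eq {u : ℕ → ℝ} {s : ℝ}
    (hu : Summable fun n : ℕ => exp (-((n : ℝ) + 1) * s) * u (n + 1)) :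
    ∑' n : ℕ, exp (-((n : ℝ) + 1) * s) * u n
      = exp (-s) * (u 0 + ∑' n : ℕ, exp (-((n : ℝ) + 1) * s) * u (n + 1)) := by
  rw [(summable_exp_neg_succ_mul_of_succ hu).tsum_eq_zero_add,
    tsum_congr fun n => by rw [exp_neg_succ_succ_mul, mul_assoc], tsum_mul_left]
  simp only [Nat.cast_zero, zero_add, neg_mul, one_mul]
  ring

theorem tsum_exp_neg_succ_mul_le_of_le_mul {u v : ℕ → ℝ} {s K : ℝ} (hle : ∀ n, v n ≤ K * u n)
    (hv : Summable fun n : ℕ => exp (-((n : ℝ) + 1) * s) * v n)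
    (hu : Summable fun n : ℕ => exp (-((n : ℝ) + 1) * s) * u (n + 1)) :
    ∑' n : ℕ, exp (-((n : ℝ) + 1) * s) * v n
      ≤ K * (exp (-s) * (u 0 + ∑' n : ℕ, exp (-((n : ℝ) + 1) * s) * u (n + 1))) := by
  rw [← tsum_exp_neg_succ_mul_eq hu, ← tsum_mul_left]
  refine hv.tsum_le_tsum (fun n => ?_) ((summable_exp_neg_succ_mul_of_succ hu).mul_left K)
  calc exp (-((n : ℝ) + 1) * s) * v n ≤ exp (-((n : ℝ) + 1) * s) * (K * u n) :=
        mul_le_mul_of_nonneg_left (hle n) (exp_nonneg _)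
    _ = K * (exp (-((n : ℝ) + 1) * s) * u n) := by ring

theorem inv_mul_mul_one_add_le_two_mul {a S : ℝ} (ha : 0 ≤ a) (hS : 1 ≤ S) :
    S⁻¹ * (a * (1 + S)) ≤ 2 * a := by
  have hS₀ : S ≠ 0 := by positivity
  have hinv : S⁻¹ ≤ 1 := inv_le_one_of_one_le₀ hS
  calc S⁻¹ * (a * (1 + S)) = a * (S⁻¹ + 1) := by field_simp
    _ ≤ a * 2 := by gcongr; linarith
    _ = 2 * a := mul_comm a 2

theorem exists_Ioo_forall_one_le_of_tendsto_atTop {f : ℝ → ℝ} {P : ℝ}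
    (hf : Tendsto f (nhdsWithin P (Ioi P)) atTop) : ∃ s₀ > P, ∀ s ∈ Ioo P s₀, 1 ≤ f s :=
  mem_nhdsGT_iff_exists_Ioo_subset.mp (hf.eventually (eventually_ge_atTop 1))

theorem conformal_measure_tail_bound_general
    (ℒ : (ℂ → ℝ) → (ℂ → ℝ)) (x : ℂ) (C β P : ℝ) (hC : 0 < C)
    (one : ℂ → ℝ) (hone : one = fun _ => 1)
    (ind : ℝ → ℂ → ℝ)
    (h2 : ∀ R > (0 : ℝ), ∀ n : ℕ, (ℒ^[n + 1]) (ind R) x ≤ C * R ^ (-β) * (ℒ^[n]) one x)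
    (Sig : ℝ → ℝ)
    (hSig : ∀ s, Sig s = ∑' n : ℕ, Real.exp (-((n : ℝ) + 1) * s) * (ℒ^[n + 1]) one x)
    (hsum : ∀ s > P, Summable fun n : ℕ =>
      Real.exp (-((n : ℝ) + 1) * s) * (ℒ^[n + 1]) one x)
    (hsum' : ∀ s > P, ∀ R > (0 : ℝ), Summable fun n : ℕ =>
      Real.exp (-((n : ℝ) + 1) * s) * (ℒ^[n + 1]) (ind R) x)
    (hdiv : Filter.Tendsto Sig (nhdsWithin P (Set.Ioi P)) Filter.atTop) :
    ∃ s₀ > P, ∀ s, P < s → s < s₀ → ∀ R > (0 : ℝ),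
      (Sig s)⁻¹ * ∑' n : ℕ, Real.exp (-((n : ℝ) + 1) * s) * (ℒ^[n + 1]) (ind R) x
        ≤ 2 * C * Real.exp (-P) * R ^ (-β) := by
  obtain ⟨s₀, hs₀, hSig_ge⟩ := exists_Ioo_forall_one_le_of_tendsto_atTop hdiv
  refine ⟨s₀, hs₀, fun s hs hs' R hR => ?_⟩
  have hS : 1 ≤ Sig s := hSig_ge s ⟨hs, hs'⟩
  have htail := tsum_exp_neg_succ_mul_le_of_le_mul (h2 R hR) (hsum' s hs R hR) (hsum s hs)
  rw [← hSig s, Function.iterate_zero_apply, hone] at htail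
  have hexp : exp (-s) ≤ exp (-P) := exp_le_exp.mpr (by linarith)
  calc (Sig s)⁻¹ * ∑' n : ℕ, exp (-((n : ℝ) + 1) * s) * (ℒ^[n + 1]) (ind R) x
      ≤ (Sig s)⁻¹ * (C * R ^ (-β) * exp (-s) * (1 + Sig s)) := by
        rw [mul_assoc (C * R ^ (-β))]
        gcongr
    _ ≤ 2 * (C * R ^ (-β) * exp (-s)) := inv_mul_mul_one_add_le_two_mul (by positivity) hS
    _ = 2 * C * exp (-s) * R ^ (-β) := by ring
    _ ≤ 2 * C * exp (-P) * R ^ (-β) := by gcongr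

/-- Uniform tail estimate ν_s(U_R) ≤ 2C e^{-P} R^{-β} for the approximating measures
ν_s = Σ_s^{-1} ∑_{n≥1} e^{-ns} (ℒ^n)^* δ_x, evaluated on U_R = {|z| > R}. -/
theorem conformal_measure_tail_bound
    (ℒ : (ℂ → ℝ) → (ℂ → ℝ)) (x : ℂ) (C β P : ℝ) (hC : 0 < C) (hβ : 0 < β)
    (hpos : ∀ g : ℂ → ℝ, (∀ w, 0 ≤ g w) → ∀ w, 0 ≤ ℒ g w)
    (one : ℂ → ℝ) (hone : one = fun _ => 1)
    (ind : ℝ → ℂ → ℝ)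
    (hind : ∀ R, ind R = Set.indicator {z : ℂ | R < ‖z‖} (fun _ => 1))
    (h1 : ∀ R > (0 : ℝ), ∀ y : ℂ, ℒ (ind R) y ≤ C * R ^ (-β))
    (h2 : ∀ R > (0 : ℝ), ∀ n : ℕ, (ℒ^[n + 1]) (ind R) x ≤ C * R ^ (-β) * (ℒ^[n]) one x)
    (Sig : ℝ → ℝ)
    (hSig : ∀ s, Sig s = ∑' n : ℕ, Real.exp (-((n : ℝ) + 1) * s) * (ℒ^[n + 1]) one x)
    (hsum : ∀ s > P, Summable fun n : ℕ =>
      Real.exp (-((n : ℝ) + 1) * s) * (ℒ^[n + 1]) one x)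
    (hsum' : ∀ s > P, ∀ R > (0 : ℝ), Summable fun n : ℕ =>
      Real.exp (-((n : ℝ) + 1) * s) * (ℒ^[n + 1]) (ind R) x)
    (hdiv : Filter.Tendsto Sig (nhdsWithin P (Set.Ioi P)) Filter.atTop) :
    ∃ s₀ > P, ∀ s, P < s → s < s₀ → ∀ R > (0 : ℝ),
      (Sig s)⁻¹ * ∑' n : ℕ, Real.exp (-((n : ℝ) + 1) * s) * (ℒ^[n + 1]) (ind R) x
        ≤ 2 * C * Real.exp (-P) * R ^ (-β) :=
  conformal_measure_tail_bound_general ℒ x C β P hC one hone ind h2 Sig hSig hsum hsum' hdiv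
end

section
/- If for every z ∈ J₀ and every λ with ‖λ - λ⁰‖ < r_ε one has (1-ε)^n ≤ |(f_λ^n)'(h_λ(z))|_σ / |(f_{λ⁰}^n)'(z)|_σ ≤ (1+ε)^n for all n ≥ 1, then the pressures satisfy |P_λ(t) - P_{λ⁰}(t)| ≤ t·max(−log(1−ε), log(1+ε)) for every t > 0. In particular λ ↦ P_λ(t) is continuous at λ⁰. -/
/-- If the weights of two transfer operators (indexed through the holomorphic motion)
satisfy (1-ε)^n ≤ g n i / g0 n i ≤ (1+ε)^n, then the pressures satisfy
|P(t) - P₀(t)| ≤ t·max(-log(1-ε), log(1+ε)); in particular the pressure depends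
continuously on the parameter. -/
theorem pressure_continuity (ι : ℕ → Type*) [∀ n, Countable (ι n)]
    (ε : ℝ) (hε : ε ∈ Set.Ioo (0 : ℝ) 1)
    (g g0 : (n : ℕ) → ι n → ℝ)
    (hg : ∀ n i, 0 < g n i) (hg0 : ∀ n i, 0 < g0 n i)
    (hratio : ∀ n : ℕ, 1 ≤ n → ∀ i : ι n,
      (1 - ε) ^ n ≤ g n i / g0 n i ∧ g n i / g0 n i ≤ (1 + ε) ^ n)
    (P P0 : ℝ → ℝ)
    (hP : ∀ t, Filter.Tendsto
      (fun n : ℕ => Real.log (∑' i : ι n, g n i ^ (-t)) / n) Filter.atTop (nhds (P t)))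
    (hP0 : ∀ t, Filter.Tendsto
      (fun n : ℕ => Real.log (∑' i : ι n, g0 n i ^ (-t)) / n) Filter.atTop (nhds (P0 t))) :
    ∀ t > (0 : ℝ), |P t - P0 t| ≤ t * max (-Real.log (1 - ε)) (Real.log (1 + ε)) := by
  obtain ⟨hε0, hε1⟩ := hε
  intro t ht
  set M : ℝ := max (-Real.log (1 - ε)) (Real.log (1 + ε)) with hM
  have hεa : (0:ℝ) < 1 - ε := by linarith
  have hεb : (0:ℝ) < 1 + ε := by linarith
  have hM1 : -Real.log (1 - ε) ≤ M := le_max_left _ _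
  have hM2 : Real.log (1 + ε) ≤ M := le_max_right _ _
  have hMnn : 0 ≤ M := le_trans (by
    simp only [Left.nonneg_neg_iff]
    exact Real.log_nonpos (by linarith) (by linarith)) hM1
  -- main per-n bound
  have key : ∀ n : ℕ, 1 ≤ n →
      |Real.log (∑' i : ι n, g n i ^ (-t)) - Real.log (∑' i : ι n, g0 n i ^ (-t))|
        ≤ n * (t * M) := by
    intro n hn
    have hc1 : (0:ℝ) < (1 - ε) ^ n := pow_pos hεa n
    have hc2 : (0:ℝ) < (1 + ε) ^ n := pow_pos hεb n
    -- pointwise bounds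
    have hup : ∀ i : ι n, g n i ^ (-t) ≤ ((1 - ε) ^ n) ^ (-t) * g0 n i ^ (-t) := by
      intro i
      have h1 : (1 - ε) ^ n * g0 n i ≤ g n i := by
        have := (hratio n hn i).1
        rw [le_div_iff₀ (hg0 n i)] at this
        linarith
      calc g n i ^ (-t) ≤ ((1 - ε) ^ n * g0 n i) ^ (-t) :=
            Real.rpow_le_rpow_of_nonpos (mul_pos hc1 (hg0 n i)) h1 (by linarith)
        _ = ((1 - ε) ^ n) ^ (-t) * g0 n i ^ (-t) :=
            Real.mul_rpow hc1.le (hg0 n i).le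
    have hlo : ∀ i : ι n, ((1 + ε) ^ n) ^ (-t) * g0 n i ^ (-t) ≤ g n i ^ (-t) := by
      intro i
      have h2 : g n i ≤ (1 + ε) ^ n * g0 n i := by
        have := (hratio n hn i).2
        rw [div_le_iff₀ (hg0 n i)] at this
        linarith
      calc ((1 + ε) ^ n) ^ (-t) * g0 n i ^ (-t) = ((1 + ε) ^ n * g0 n i) ^ (-t) :=
            (Real.mul_rpow hc2.le (hg0 n i).le).symm
        _ ≤ g n i ^ (-t) :=
            Real.rpow_le_rpow_of_nonpos (hg n i) h2 (by linarith)
    by_cases hs0 : Summable (fun i : ι n => g0 n i ^ (-t))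
    · have hs : Summable (fun i : ι n => g n i ^ (-t)) := by
        refine Summable.of_nonneg_of_le (fun i => (Real.rpow_pos_of_pos (hg n i) _).le)
          hup (hs0.mul_left _)
      cases isEmpty_or_nonempty (ι n) with
      | inl h =>
        simp [tsum_empty]
        positivity
      | inr h =>
        have hT0 : 0 < ∑' i : ι n, g0 n i ^ (-t) := by
          obtain ⟨i⟩ := h
          exact Summable.tsum_pos hs0 (fun j => (Real.rpow_pos_of_pos (hg0 n j) _).le) i
            (Real.rpow_pos_of_pos (hg0 n i) _)
        have hT : 0 < ∑' i : ι n, g n i ^ (-t) := by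
          obtain ⟨i⟩ := h
          exact Summable.tsum_pos hs (fun j => (Real.rpow_pos_of_pos (hg n j) _).le) i
            (Real.rpow_pos_of_pos (hg n i) _)
        have hub : (∑' i : ι n, g n i ^ (-t))
            ≤ ((1 - ε) ^ n) ^ (-t) * ∑' i : ι n, g0 n i ^ (-t) := by
          rw [← tsum_mul_left]
          exact Summable.tsum_le_tsum hup hs (hs0.mul_left _)
        have hlb : ((1 + ε) ^ n) ^ (-t) * (∑' i : ι n, g0 n i ^ (-t))
            ≤ ∑' i : ι n, g n i ^ (-t) := by
          rw [← tsum_mul_left]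
          exact Summable.tsum_le_tsum hlo (hs0.mul_left _) hs
        rw [abs_sub_le_iff]
        constructor
        · have h1 : Real.log (∑' i : ι n, g n i ^ (-t)) ≤
              Real.log (((1 - ε) ^ n) ^ (-t)) + Real.log (∑' i : ι n, g0 n i ^ (-t)) := by
            rw [← Real.log_mul (by positivity) hT0.ne']
            exact Real.log_le_log hT hub
          have h2 : Real.log (((1 - ε) ^ n) ^ (-t)) = -t * (n * Real.log (1 - ε)) := by
            rw [Real.log_rpow hc1, Real.log_pow]
          have h3 : (n:ℝ) * (t * -Real.log (1 - ε)) ≤ n * (t * M) := by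
            have hn' : (0:ℝ) ≤ n := Nat.cast_nonneg n
            have := mul_le_mul_of_nonneg_left hM1 ht.le
            nlinarith
          nlinarith [h1, h2, h3]
        · have h1 : Real.log (((1 + ε) ^ n) ^ (-t)) + Real.log (∑' i : ι n, g0 n i ^ (-t)) ≤
              Real.log (∑' i : ι n, g n i ^ (-t)) := by
            rw [← Real.log_mul (by positivity) hT0.ne']
            exact Real.log_le_log (by positivity) hlb
          have h2 : Real.log (((1 + ε) ^ n) ^ (-t)) = -t * (n * Real.log (1 + ε)) := by
            rw [Real.log_rpow hc2, Real.log_pow]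
          have h3 : (n:ℝ) * (t * Real.log (1 + ε)) ≤ n * (t * M) := by
            have hn' : (0:ℝ) ≤ n := Nat.cast_nonneg n
            have := mul_le_mul_of_nonneg_left hM2 ht.le
            nlinarith
          nlinarith [h1, h2, h3]
    · have hs : ¬ Summable (fun i : ι n => g n i ^ (-t)) := by
        intro hs
        exact hs0 (Summable.of_nonneg_of_le
          (fun i => (Real.rpow_pos_of_pos (hg0 n i) _).le)
          (fun i => by
            have hi := hlo i
            calc g0 n i ^ (-t)
                = (((1 + ε) ^ n) ^ (-t))⁻¹ * (((1 + ε) ^ n) ^ (-t) * g0 n i ^ (-t)) := by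
                  field_simp
              _ ≤ (((1 + ε) ^ n) ^ (-t))⁻¹ * g n i ^ (-t) :=
                  mul_le_mul_of_nonneg_left hi (by positivity))
          (hs.mul_left _))
      rw [tsum_eq_zero_of_not_summable hs, tsum_eq_zero_of_not_summable hs0]
      simp
      positivity
  -- pass to the limit
  have hD : Filter.Tendsto (fun n : ℕ =>
      Real.log (∑' i : ι n, g n i ^ (-t)) / n - Real.log (∑' i : ι n, g0 n i ^ (-t)) / n)
      Filter.atTop (nhds (P t - P0 t)) := (hP t).sub (hP0 t)
  have hbound : ∀ᶠ n : ℕ in Filter.atTop,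
      |Real.log (∑' i : ι n, g n i ^ (-t)) / n - Real.log (∑' i : ι n, g0 n i ^ (-t)) / n|
        ≤ t * M := by
    filter_upwards [Filter.eventually_ge_atTop 1] with n hn
    have hn' : (0:ℝ) < n := by exact_mod_cast hn
    rw [div_sub_div_same, abs_div, abs_of_pos hn', div_le_iff₀ hn']
    calc |Real.log (∑' i : ι n, g n i ^ (-t)) - Real.log (∑' i : ι n, g0 n i ^ (-t))|
        ≤ n * (t * M) := key n hn
      _ = t * M * n := by ring
  exact le_of_tendsto hD.abs hbound
end
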